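/- arXiv:1909.11312 — 2 statements merged into one kernel-verified Lean document; each statement's English description precedes it below -/
import Mathlib

section
/- Suppose r is a solution of the classical Yang–Baxter equation on L, r + τ(r) is L-invariant, and the ideal I_λ = θ_λ([L, L]) satisfies R(I_λ) ⊆ I_λ and R*(I_λ) ⊆ I_λ. Then the induced linear maps R̄ and R̄* on the quotient Lie algebra L/I_λ are both Rota–Baxter operators of weight λ, and R̄(z) + R̄*(z) + λz = 0 for every z in the commutator ideal [L/I_λ, L/I_λ]. -/
/-!
Contracting the CYBE tensor against `ω` in its last two slots gives
`⁅R x, R y⁆ = R (⁅x, R y⁆ - ⁅R* x, y⁆)`, and contracting the invariance of `r + τ(r)` shows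
that `R + R*` commutes with `ad y`. Together they turn the Rota–Baxter defect
`⁅R x, R y⁆ - R (⁅R x, y⁆ + ⁅x, R y⁆ + λ ⁅x, y⁆)` into `-R (θ_λ ⁅x, y⁆) ∈ I_λ`. By `ω`-duality
`R*` satisfies the first identity with the roles of `R` and `R*` exchanged, so the same holds for
`R*`. Finally `θ_λ` maps `[L, L]` into `I_λ`, so the map it induces on `L ⧸ I_λ` kills the
commutator ideal of the quotient.
-/

open TensorProduct

/-- The linear map induced on the quotient `L ⧸ I` by a linear map `T : L → L`
preserving the Lie ideal `I`. -/
def inducedQuotMap (F : Type*) [Field F] (L : Type*) [LieRing L] [LieAlgebra F L]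
    (I : LieIdeal F L) (T : L →ₗ[F] L) (h : ∀ x ∈ I, T x ∈ I) :
    (L ⧸ I) →ₗ[F] (L ⧸ I) :=
  Submodule.mapQ I.toSubmodule I.toSubmodule T h

def IsRotaBaxter {F M : Type*} [CommRing F] [LieRing M] [LieAlgebra F M] (T : M →ₗ[F] M)
    (lam : F) : Prop :=
  ∀ x y : M, ⁅T x, T y⁆ = T (⁅T x, y⁆ + ⁅x, T y⁆ + lam • ⁅x, y⁆)

lemma LinearMap.apply_eq_zero_of_mem_lie_top_top {F L M : Type*} [CommRing F] [LieRing L]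
    [LieAlgebra F L] [AddCommGroup M] [Module F M] {φ : L →ₗ[F] M}
    (h : ∀ x y : L, φ ⁅x, y⁆ = 0) {z : L} (hz : z ∈ ⁅(⊤ : LieIdeal F L), (⊤ : LieIdeal F L)⁆) :
    φ z = 0 := by
  rw [← LieSubmodule.mem_toSubmodule, LieSubmodule.lieIdeal_oper_eq_linear_span'] at hz
  refine (Submodule.span_le (p := LinearMap.ker φ)).mpr ?_ hz
  rintro _ ⟨x, -, y, -, rfl⟩
  exact h x y

section Quadratic

variable {F L : Type*} [CommRing F] [LieRing L] [LieAlgebra F L]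
  {ω : LinearMap.BilinForm F L} {R Rstar : L →ₗ[F] L}

section Tensor

variable {ι : Type*} [Fintype ι] {a b : ι → L}

lemma adjoint_apply_eq_sum (hnd : ω.Nondegenerate) (hsymm : ∀ x y : L, ω x y = ω y x)
    (hR : ∀ x : L, R x = ∑ i, ω (b i) x • a i) (hadj : ∀ x y : L, ω (R x) y = ω x (Rstar y))
    (x : L) : Rstar x = ∑ i, ω (a i) x • b i := by
  refine sub_eq_zero.mp (hnd.2 _ fun t => ?_)
  rw [map_sub, ← hadj, hR, sub_eq_zero]
  simp only [map_sum, map_smul, LinearMap.sum_apply, LinearMap.smul_apply, smul_eq_mul]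
  exact Finset.sum_congr rfl fun i _ => by rw [hsymm t, mul_comm]

lemma apply_lie_add_adjoint_apply_lie (hinv : ∀ x y z : L, ω ⁅x, y⁆ z = ω x ⁅y, z⁆)
    (hR : ∀ x : L, R x = ∑ i, ω (b i) x • a i) (hRs : ∀ x : L, Rstar x = ∑ i, ω (a i) x • b i)
    (hinvr : ∀ y : L, ∑ i, (⁅a i, y⁆ ⊗ₜ[F] b i + a i ⊗ₜ[F] ⁅b i, y⁆
        + ⁅b i, y⁆ ⊗ₜ[F] a i + b i ⊗ₜ[F] ⁅a i, y⁆) = (0 : L ⊗[F] L))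
    (x y : L) : R ⁅x, y⁆ + Rstar ⁅x, y⁆ = ⁅R x, y⁆ + ⁅Rstar x, y⁆ := by
  -- contract with `u ⊗ v ↦ ω v x • u`
  have h := congrArg ((TensorProduct.rid F L).toLinearMap ∘ₗ (ω.flip x).lTensor L) (hinvr y)
  simp only [map_sum, map_add, map_zero, LinearMap.comp_apply, LinearMap.lTensor_tmul,
    LinearEquiv.coe_coe, TensorProduct.rid_tmul, LinearMap.BilinForm.flip_apply, hinv _ y x] at h
  rw [← lie_skew y x] at h
  simp only [hR, hRs, sum_lie, smul_lie, map_neg, neg_smul] at h ⊢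
  rw [eq_comm, ← sub_eq_zero, ← h]
  simp only [Finset.sum_add_distrib, Finset.sum_neg_distrib]
  abel

lemma lie_apply_apply_eq_of_cybe (hsymm : ∀ x y : L, ω x y = ω y x)
    (hinv : ∀ x y z : L, ω ⁅x, y⁆ z = ω x ⁅y, z⁆)
    (hR : ∀ x : L, R x = ∑ i, ω (b i) x • a i) (hRs : ∀ x : L, Rstar x = ∑ i, ω (a i) x • b i)
    (hCYBE : ∑ i, ∑ j, (⁅a i, a j⁆ ⊗ₜ[F] (b i ⊗ₜ[F] b j)
        - a i ⊗ₜ[F] (⁅a j, b i⁆ ⊗ₜ[F] b j)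
        + a i ⊗ₜ[F] (a j ⊗ₜ[F] ⁅b i, b j⁆)) = (0 : L ⊗[F] (L ⊗[F] L)))
    (x y : L) : ⁅R x, R y⁆ = R (⁅x, R y⁆ - ⁅Rstar x, y⁆) := by
  have hcyc (u v w : L) : ω ⁅u, v⁆ w = ω v ⁅w, u⁆ := by rw [hinv, hsymm, hinv]
  -- contract with `z ⊗ u ⊗ v ↦ (ω u x * ω v y) • z`
  have h := congrArg ((TensorProduct.rid F L).toLinearMap ∘ₗ
    (LinearMap.mul' F F ∘ₗ TensorProduct.map (ω.flip x) (ω.flip y)).lTensor L) hCYBE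
  simp only [map_sum, map_add, map_sub, map_zero, LinearMap.comp_apply, LinearMap.lTensor_tmul,
    TensorProduct.map_tmul, LinearMap.mul'_apply, LinearEquiv.coe_coe, TensorProduct.rid_tmul,
    LinearMap.BilinForm.flip_apply, hcyc _ _ x, hinv _ _ y] at h
  rw [← sub_eq_zero, ← h, hR x, hR y, sum_lie_sum]
  simp only [hR, hRs, map_sub, sum_lie, lie_sum, smul_lie, lie_smul, map_sum, map_smul,
    Finset.sum_smul, sub_smul, smul_smul, smul_eq_mul, Finset.sum_sub_distrib,
    Finset.sum_add_distrib]
  simp only [mul_comm]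
  abel

end Tensor

lemma lie_adjoint_apply_adjoint_apply (hnd : ω.Nondegenerate) (hsymm : ∀ x y : L, ω x y = ω y x)
    (hinv : ∀ x y z : L, ω ⁅x, y⁆ z = ω x ⁅y, z⁆) (hadj : ∀ x y : L, ω (R x) y = ω x (Rstar y))
    (h : ∀ x y : L, ⁅R x, R y⁆ = R (⁅x, R y⁆ - ⁅Rstar x, y⁆)) (x y : L) :
    ⁅Rstar x, Rstar y⁆ = Rstar (⁅x, Rstar y⁆ - ⁅R x, y⁆) := by
  have hadj' (u v : L) : ω (Rstar u) v = ω u (R v) := by rw [hsymm, ← hadj, hsymm]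
  -- pairing with `z`, both sides become `ω x (R ⁅y, R z⁆ - ⁅R y, R z⁆)`
  have key (x y : L) : ⁅Rstar x, Rstar y⁆ = Rstar (⁅Rstar x, y⁆ - ⁅x, R y⁆) := by
    refine sub_eq_zero.mp (hnd.1 _ fun z => ?_)
    have hz : R ⁅Rstar y, z⁆ = R ⁅y, R z⁆ - ⁅R y, R z⁆ := by rw [h, map_sub, sub_sub_cancel]
    simp only [map_sub, LinearMap.sub_apply, hinv, hadj', hz, sub_self]
  rw [← lie_skew, key, ← lie_skew (Rstar y) x, ← lie_skew y (R x), ← map_neg]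
  congr 1
  abel

end Quadratic

section Quotient

variable {F L : Type*} [Field F] [LieRing L] [LieAlgebra F L] {I : LieIdeal F L}

lemma isRotaBaxter_inducedQuotMap {T T' : L →ₗ[F] L} {lam : F} (hTI : ∀ x ∈ I, T x ∈ I)
    (hT : ∀ x y : L, ⁅T x, T y⁆ = T (⁅x, T y⁆ - ⁅T' x, y⁆))
    (hder : ∀ x y : L, T ⁅x, y⁆ + T' ⁅x, y⁆ = ⁅T x, y⁆ + ⁅T' x, y⁆)
    (hθ : ∀ x y : L, T ⁅x, y⁆ + T' ⁅x, y⁆ + lam • ⁅x, y⁆ ∈ I) :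
    IsRotaBaxter (inducedQuotMap F L I T hTI) lam := by
  rintro ⟨x⟩ ⟨y⟩
  refine (Submodule.Quotient.eq _).mpr ?_
  have hdefect : ⁅T x, T y⁆ - T (⁅T x, y⁆ + ⁅x, T y⁆ + lam • ⁅x, y⁆) =
      -T (T ⁅x, y⁆ + T' ⁅x, y⁆ + lam • ⁅x, y⁆) := by
    rw [hder, hT]
    simp only [map_add, map_sub, map_smul]
    abel
  rw [hdefect]
  exact I.neg_mem (hTI _ (hθ x y))

lemma inducedQuotMap_add_add_smul_eq_zero {R R' : L →ₗ[F] L} {lam : F}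
    (hRI : ∀ x ∈ I, R x ∈ I) (hR'I : ∀ x ∈ I, R' x ∈ I)
    (hθ : ∀ x y : L, R ⁅x, y⁆ + R' ⁅x, y⁆ + lam • ⁅x, y⁆ ∈ I)
    {z : L ⧸ I} (hz : z ∈ ⁅(⊤ : LieIdeal F (L ⧸ I)), (⊤ : LieIdeal F (L ⧸ I))⁆) :
    inducedQuotMap F L I R hRI z + inducedQuotMap F L I R' hR'I z + lam • z = 0 := by
  refine LinearMap.apply_eq_zero_of_mem_lie_top_top
    (φ := inducedQuotMap F L I R hRI + inducedQuotMap F L I R' hR'I + lam • LinearMap.id)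
    ?_ hz
  rintro ⟨x⟩ ⟨y⟩
  exact (Submodule.Quotient.mk_eq_zero _).mpr (hθ x y)

end Quotient

theorem stmt_9_general
    (F : Type*) [Field F]
    (L : Type*) [LieRing L] [LieAlgebra F L]
    (ω : LinearMap.BilinForm F L)
    (hnd : ω.Nondegenerate)
    (hsymm : ∀ x y : L, ω x y = ω y x)
    (hinv : ∀ x y z : L, ω ⁅x, y⁆ z = ω x ⁅y, z⁆)
    (ι : Type*) [Fintype ι] (a b : ι → L)
    (R Rstar : L →ₗ[F] L)
    (hR : ∀ x : L, R x = ∑ i, ω (b i) x • a i)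
    (hadj : ∀ x y : L, ω (R x) y = ω x (Rstar y))
    (hCYBE : ∑ i, ∑ j, (⁅a i, a j⁆ ⊗ₜ[F] (b i ⊗ₜ[F] b j)
        - a i ⊗ₜ[F] (⁅a j, b i⁆ ⊗ₜ[F] b j)
        + a i ⊗ₜ[F] (a j ⊗ₜ[F] ⁅b i, b j⁆)) = (0 : L ⊗[F] (L ⊗[F] L)))
    (hinvr : ∀ y : L, ∑ i, (⁅a i, y⁆ ⊗ₜ[F] b i + a i ⊗ₜ[F] ⁅b i, y⁆
        + ⁅b i, y⁆ ⊗ₜ[F] a i + b i ⊗ₜ[F] ⁅a i, y⁆) = (0 : L ⊗[F] L))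
    (lam : F) (I : LieIdeal F L)
    (hI : I.toSubmodule = Submodule.map (R + Rstar + lam • LinearMap.id)
        (⁅(⊤ : LieIdeal F L), (⊤ : LieIdeal F L)⁆ : LieIdeal F L).toSubmodule)
    (hRI : ∀ x ∈ I, R x ∈ I)
    (hRsI : ∀ x ∈ I, Rstar x ∈ I) :
    (∀ x y : L ⧸ I,
       ⁅inducedQuotMap F L I R hRI x, inducedQuotMap F L I R hRI y⁆ =
       inducedQuotMap F L I R hRI
         (⁅inducedQuotMap F L I R hRI x, y⁆ + ⁅x, inducedQuotMap F L I R hRI y⁆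
           + lam • ⁅x, y⁆)) ∧
    (∀ x y : L ⧸ I,
       ⁅inducedQuotMap F L I Rstar hRsI x, inducedQuotMap F L I Rstar hRsI y⁆ =
       inducedQuotMap F L I Rstar hRsI
         (⁅inducedQuotMap F L I Rstar hRsI x, y⁆ + ⁅x, inducedQuotMap F L I Rstar hRsI y⁆
           + lam • ⁅x, y⁆)) ∧
    (∀ z ∈ (⁅(⊤ : LieIdeal F (L ⧸ I)), (⊤ : LieIdeal F (L ⧸ I))⁆ : LieIdeal F (L ⧸ I)),
       inducedQuotMap F L I R hRI z + inducedQuotMap F L I Rstar hRsI z + lam • z = 0) := by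
  have hRs := adjoint_apply_eq_sum hnd hsymm hR hadj
  have hRR := lie_apply_apply_eq_of_cybe hsymm hinv hR hRs hCYBE
  have hRsRs := lie_adjoint_apply_adjoint_apply hnd hsymm hinv hadj hRR
  have hder := apply_lie_add_adjoint_apply_lie hinv hR hRs hinvr
  have hder' (x y : L) : Rstar ⁅x, y⁆ + R ⁅x, y⁆ = ⁅Rstar x, y⁆ + ⁅R x, y⁆ := by
    rw [add_comm, hder, add_comm]
  have hθ (x y : L) : R ⁅x, y⁆ + Rstar ⁅x, y⁆ + lam • ⁅x, y⁆ ∈ I := by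
    rw [← LieSubmodule.mem_toSubmodule, hI]
    exact Submodule.mem_map_of_mem
      (LieSubmodule.lie_mem_lie (LieSubmodule.mem_top x) (LieSubmodule.mem_top y))
  have hθ' (x y : L) : Rstar ⁅x, y⁆ + R ⁅x, y⁆ + lam • ⁅x, y⁆ ∈ I := by
    rw [add_comm (Rstar _)]
    exact hθ x y
  exact ⟨isRotaBaxter_inducedQuotMap hRI hRR hder hθ,
    isRotaBaxter_inducedQuotMap hRsI hRsRs hder' hθ',
    fun z hz => inducedQuotMap_add_add_smul_eq_zero hRI hRsI hθ hz⟩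

theorem stmt_9
    (F : Type*) [Field F] [CharZero F]
    (L : Type*) [LieRing L] [LieAlgebra F L] [FiniteDimensional F L]
    (ω : LinearMap.BilinForm F L)
    (hnd : ω.Nondegenerate)
    (hsymm : ∀ x y : L, ω x y = ω y x)
    (hinv : ∀ x y z : L, ω ⁅x, y⁆ z = ω x ⁅y, z⁆)
    (ι : Type*) [Fintype ι] (a b : ι → L)
    (R Rstar : L →ₗ[F] L)
    (hR : ∀ x : L, R x = ∑ i, ω (b i) x • a i)
    (hadj : ∀ x y : L, ω (R x) y = ω x (Rstar y))
    (hCYBE : ∑ i, ∑ j, (⁅a i, a j⁆ ⊗ₜ[F] (b i ⊗ₜ[F] b j)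
        - a i ⊗ₜ[F] (⁅a j, b i⁆ ⊗ₜ[F] b j)
        + a i ⊗ₜ[F] (a j ⊗ₜ[F] ⁅b i, b j⁆)) = (0 : L ⊗[F] (L ⊗[F] L)))
    (hinvr : ∀ y : L, ∑ i, (⁅a i, y⁆ ⊗ₜ[F] b i + a i ⊗ₜ[F] ⁅b i, y⁆
        + ⁅b i, y⁆ ⊗ₜ[F] a i + b i ⊗ₜ[F] ⁅a i, y⁆) = (0 : L ⊗[F] L))
    (lam : F) (I : LieIdeal F L)
    (hI : I.toSubmodule = Submodule.map (R + Rstar + lam • LinearMap.id)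
        (⁅(⊤ : LieIdeal F L), (⊤ : LieIdeal F L)⁆ : LieIdeal F L).toSubmodule)
    (hRI : ∀ x ∈ I, R x ∈ I)
    (hRsI : ∀ x ∈ I, Rstar x ∈ I) :
    (∀ x y : L ⧸ I,
       ⁅inducedQuotMap F L I R hRI x, inducedQuotMap F L I R hRI y⁆ =
       inducedQuotMap F L I R hRI
         (⁅inducedQuotMap F L I R hRI x, y⁆ + ⁅x, inducedQuotMap F L I R hRI y⁆
           + lam • ⁅x, y⁆)) ∧
    (∀ x y : L ⧸ I,
       ⁅inducedQuotMap F L I Rstar hRsI x, inducedQuotMap F L I Rstar hRsI y⁆ =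
       inducedQuotMap F L I Rstar hRsI
         (⁅inducedQuotMap F L I Rstar hRsI x, y⁆ + ⁅x, inducedQuotMap F L I Rstar hRsI y⁆
           + lam • ⁅x, y⁆)) ∧
    (∀ z ∈ (⁅(⊤ : LieIdeal F (L ⧸ I)), (⊤ : LieIdeal F (L ⧸ I))⁆ : LieIdeal F (L ⧸ I)),
       inducedQuotMap F L I R hRI z + inducedQuotMap F L I Rstar hRsI z + lam • z = 0) :=
  stmt_9_general F L ω hnd hsymm hinv ι a b R Rstar hR hadj hCYBE hinvr lam I hI hRI hRsI
end

section
/- Suppose R and R* are both Rota–Baxter operators of the same nonzero weight λ on L, that R([a,b]) + R*([a,b]) = [R(a), b] + [R*(a), b] for all a, b ∈ L, and that the commutator ideal [L, L] decomposes as a direct sum of two Lie ideals [L, L] = I_1 ⊕ I_2 of L with R(I_1) = R*(I_1) = 0 and R(x) + R*(x) + λx = 0 for all x ∈ I_2. Then r is a solution of the classical Yang–Baxter equation and r + τ(r) is L-invariant. -/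
/-!
Since `ω` is nondegenerate, a tensor vanishes once all its pairings with `x ⊗ y ⊗ z` (resp.
`x ⊗ z`) do, and these pairings are expressions in `R` and `R*`. For the CYBE tensor the pairing
is `ω(R*[x, Ry] - R*[R*x, y] + [R*x, R*y], z)`, which the Rota–Baxter identity for `R*` turns
into `ω(R*[x, Sy], z)` with `S = R + R* + λ`. The centroid condition lets `S` pass through
brackets, so `[x, Sy] = S[x, y]`; on `[L, L] = I₁ + I₂` the map `S` is `λ` on `I₁` and `0` on
`I₂`, so `S[x, y] ∈ I₁ ⊆ ker R*`. For the invariance, `T = R + R*` lies in the centroid, and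
with `ω` invariant and symmetric this makes `ω([Tx, y], z)` antisymmetric in `x` and `z`.
-/

open TensorProduct Module

namespace TensorProduct

variable {K M N P : Type*} [Field K] [AddCommGroup M] [Module K M] [AddCommGroup N] [Module K N]
  [AddCommGroup P] [Module K P] [FiniteDimensional K M] [FiniteDimensional K N]
  [FiniteDimensional K P]

theorem eq_zero_of_forall_dualDistrib_tmul_eq_zero {t : M ⊗[K] N}
    (h : ∀ (f : Dual K M) (g : Dual K N), dualDistrib K M N (f ⊗ₜ g) t = 0) : t = 0 := by
  refine (forall_dual_apply_eq_zero_iff K t).mp fun φ => ?_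
  obtain ⟨s, rfl⟩ := (dualDistribEquiv K M N).surjective φ
  induction s using TensorProduct.induction_on with
  | zero => simp
  | tmul f g => exact h f g
  | add s s' hs hs' => simp_all

theorem eq_zero_of_forall_dualDistrib_tmul_tmul_eq_zero {t : M ⊗[K] (N ⊗[K] P)}
    (h : ∀ (f : Dual K M) (g : Dual K N) (k : Dual K P),
      dualDistrib K M (N ⊗[K] P) (f ⊗ₜ dualDistrib K N P (g ⊗ₜ k)) t = 0) : t = 0 := by
  refine eq_zero_of_forall_dualDistrib_tmul_eq_zero fun f ψ => ?_
  obtain ⟨s, rfl⟩ := (dualDistribEquiv K N P).surjective ψ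
  induction s using TensorProduct.induction_on with
  | zero => simp
  | tmul g k => exact h f g k
  | add s s' hs hs' => simp_all [tmul_add]

end TensorProduct

namespace LinearMap.BilinForm.Nondegenerate

variable {F L : Type*} [Field F] [AddCommGroup L] [Module F L] {ω : LinearMap.BilinForm F L}

theorem tensor_eq_zero [FiniteDimensional F L] (hnd : ω.Nondegenerate) {t : L ⊗[F] L}
    (h : ∀ x y : L, dualDistrib F L L (ω.flip x ⊗ₜ ω.flip y) t = 0) : t = 0 := by
  refine eq_zero_of_forall_dualDistrib_tmul_eq_zero fun f g => ?_
  obtain ⟨x, rfl⟩ := (ω.flip.toDual hnd.flip).surjective f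
  obtain ⟨y, rfl⟩ := (ω.flip.toDual hnd.flip).surjective g
  exact h x y

theorem tensor₃_eq_zero [FiniteDimensional F L] (hnd : ω.Nondegenerate) {t : L ⊗[F] (L ⊗[F] L)}
    (h : ∀ x y z : L,
      dualDistrib F L (L ⊗[F] L) (ω.flip x ⊗ₜ dualDistrib F L L (ω.flip y ⊗ₜ ω.flip z)) t = 0) :
    t = 0 := by
  refine eq_zero_of_forall_dualDistrib_tmul_tmul_eq_zero fun f g k => ?_
  obtain ⟨x, rfl⟩ := (ω.flip.toDual hnd.flip).surjective f
  obtain ⟨y, rfl⟩ := (ω.flip.toDual hnd.flip).surjective g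
  obtain ⟨z, rfl⟩ := (ω.flip.toDual hnd.flip).surjective k
  exact h x y z

theorem adjoint_apply_eq_sum {ι : Type*} [Fintype ι] {a b : ι → L} {R R' : L →ₗ[F] L}
    (hnd : ω.Nondegenerate) (hsymm : ∀ x y : L, ω x y = ω y x)
    (hR : ∀ x, R x = ∑ i, ω (b i) x • a i) (hadj : ∀ x y, ω (R x) y = ω x (R' y)) (x : L) :
    R' x = ∑ i, ω (a i) x • b i := by
  refine sub_eq_zero.mp (hnd.2 _ fun u => ?_)
  rw [map_sub, ← hadj, hR, sub_eq_zero]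
  simp only [map_sum, map_smul, smul_eq_mul, LinearMap.coe_sum, Finset.sum_apply,
    LinearMap.smul_apply]
  refine Finset.sum_congr rfl fun i _ => ?_
  rw [hsymm u]; ring

end LinearMap.BilinForm.Nondegenerate

namespace LinearMap

section Lie

variable {F L : Type*} [Field F] [LieRing L] [LieAlgebra F L]

def IsCentroid (T : L →ₗ[F] L) : Prop :=
  ∀ x y : L, T ⁅x, y⁆ = ⁅T x, y⁆

def IsRotaBaxter (T : L →ₗ[F] L) (lam : F) : Prop :=
  ∀ x y : L, ⁅T x, T y⁆ = T (⁅T x, y⁆ + ⁅x, T y⁆ + lam • ⁅x, y⁆)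

namespace IsCentroid

variable {T : L →ₗ[F] L}

theorem apply_lie_right (hT : T.IsCentroid) (x y : L) : T ⁅x, y⁆ = ⁅x, T y⁆ := by
  rw [← lie_skew, map_neg, hT, lie_skew]

theorem add_smul_id (hT : T.IsCentroid) (c : F) : (T + c • LinearMap.id).IsCentroid := by
  intro x y
  simp only [add_apply, smul_apply, id_apply, hT x y, add_lie, smul_lie]

theorem pairing_add_pairing_eq_zero (hT : T.IsCentroid) {ω : LinearMap.BilinForm F L}
    (hsymm : ∀ x y : L, ω x y = ω y x) (hinv : ∀ x y z : L, ω ⁅x, y⁆ z = ω x ⁅y, z⁆)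
    (x y z : L) : ω ⁅T x, y⁆ z + ω ⁅T z, y⁆ x = 0 := by
  have : ω ⁅T z, y⁆ x = -ω ⁅T x, y⁆ z :=
    calc ω ⁅T z, y⁆ x = ω ⁅z, T y⁆ x := by rw [← hT, hT.apply_lie_right]
      _ = ω z ⁅y, T x⁆ := by rw [hinv, ← hT.apply_lie_right, ← hT]
      _ = -ω ⁅T x, y⁆ z := by rw [← lie_skew, map_neg, hsymm]
  rw [this, add_neg_cancel]

end IsCentroid

theorem IsRotaBaxter.cybe_pairing {ω : LinearMap.BilinForm F L} {R R' : L →ₗ[F] L} {lam : F}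
    (hR' : R'.IsRotaBaxter lam) (hsymm : ∀ x y : L, ω x y = ω y x)
    (hinv : ∀ x y z : L, ω ⁅x, y⁆ z = ω x ⁅y, z⁆) (hadj : ∀ x y, ω (R x) y = ω x (R' y))
    (x y z : L) :
    ω ⁅R y, R z⁆ x - ω ⁅R z, R' x⁆ y + ω ⁅R' x, R' y⁆ z
      = ω (R' ⁅x, R y + R' y + lam • y⁆) z := by
  have h₁ : ω ⁅R y, R z⁆ x = ω (R' ⁅x, R y⁆) z := by
    rw [hsymm, ← hinv, hsymm, hadj, hsymm]
  have h₂ : ω ⁅R z, R' x⁆ y = ω (R' ⁅R' x, y⁆) z := by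
    rw [hinv, hadj, hsymm]
  rw [h₁, h₂, hR', ← sub_apply, ← add_apply, ← map_sub, ← map_add, ← map_sub, ← map_add,
    lie_add, lie_add, lie_smul]
  congr 3
  abel

theorem apply_mem_of_mem_sup {I₁ I₂ : LieIdeal F L} {S : L →ₗ[F] L} {c : F}
    (h₁ : ∀ x ∈ I₁, S x = c • x) (h₂ : ∀ x ∈ I₂, S x = 0) {u : L} (hu : u ∈ I₁ ⊔ I₂) :
    S u ∈ I₁ := by
  obtain ⟨u₁, hu₁, u₂, hu₂, rfl⟩ := (LieSubmodule.mem_sup I₁ I₂ u).mp hu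
  rw [map_add, h₁ u₁ hu₁, h₂ u₂ hu₂, add_zero]
  exact I₁.smul_mem c hu₁

end Lie

end LinearMap

section Tensors

variable {F L ι : Type*} [Field F] [LieRing L] [LieAlgebra F L] [Fintype ι]

def cybeTensor (a b : ι → L) : L ⊗[F] (L ⊗[F] L) :=
  ∑ i, ∑ j, (⁅a i, a j⁆ ⊗ₜ[F] (b i ⊗ₜ[F] b j) - a i ⊗ₜ[F] (⁅a j, b i⁆ ⊗ₜ[F] b j)
    + a i ⊗ₜ[F] (a j ⊗ₜ[F] ⁅b i, b j⁆))

def adSymmTensor (a b : ι → L) (y : L) : L ⊗[F] L :=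
  ∑ i, (⁅a i, y⁆ ⊗ₜ[F] b i + a i ⊗ₜ[F] ⁅b i, y⁆ + ⁅b i, y⁆ ⊗ₜ[F] a i + b i ⊗ₜ[F] ⁅a i, y⁆)

variable {ω : LinearMap.BilinForm F L} {a b : ι → L} {R R' : L →ₗ[F] L}

theorem dualDistrib_cybeTensor (hR : ∀ x, R x = ∑ i, ω (b i) x • a i)
    (hR' : ∀ x, R' x = ∑ i, ω (a i) x • b i) (x y z : L) :
    dualDistrib F L (L ⊗[F] L) (ω.flip x ⊗ₜ dualDistrib F L L (ω.flip y ⊗ₜ ω.flip z))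
      (cybeTensor a b) = ω ⁅R y, R z⁆ x - ω ⁅R z, R' x⁆ y + ω ⁅R' x, R' y⁆ z := by
  simp only [cybeTensor, hR, hR', map_sum, map_sub, map_add, dualDistrib_apply,
    LinearMap.BilinForm.flip_apply, sum_lie, lie_sum, smul_lie, lie_smul, map_smul,
    LinearMap.sum_apply, LinearMap.smul_apply, smul_eq_mul, Finset.sum_sub_distrib,
    Finset.sum_add_distrib, Finset.mul_sum]
  congr 1; congr 1
  · rw [Finset.sum_comm]
    exact Finset.sum_congr rfl fun _ _ => Finset.sum_congr rfl fun _ _ => by ring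
  · exact Finset.sum_congr rfl fun _ _ => Finset.sum_congr rfl fun _ _ => by ring
  · rw [Finset.sum_comm]
    exact Finset.sum_congr rfl fun _ _ => Finset.sum_congr rfl fun _ _ => by ring

theorem dualDistrib_adSymmTensor (hR : ∀ x, R x = ∑ i, ω (b i) x • a i)
    (hR' : ∀ x, R' x = ∑ i, ω (a i) x • b i) (x y z : L) :
    dualDistrib F L L (ω.flip x ⊗ₜ ω.flip z) (adSymmTensor a b y)
      = ω ⁅(R + R') x, y⁆ z + ω ⁅(R + R') z, y⁆ x := by
  simp only [adSymmTensor, hR, hR', LinearMap.add_apply, add_lie, map_sum, map_add,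
    dualDistrib_apply, LinearMap.BilinForm.flip_apply, sum_lie, smul_lie, map_smul,
    LinearMap.sum_apply, LinearMap.smul_apply, smul_eq_mul, Finset.sum_add_distrib]
  simp only [mul_comm ((ω ⁅_, y⁆) x)]
  ring

end Tensors

theorem stmt_14_general
    (F : Type*) [Field F]
    (L : Type*) [LieRing L] [LieAlgebra F L] [FiniteDimensional F L]
    (ω : LinearMap.BilinForm F L)
    (hnd : ω.Nondegenerate)
    (hsymm : ∀ x y : L, ω x y = ω y x)
    (hinv : ∀ x y z : L, ω ⁅x, y⁆ z = ω x ⁅y, z⁆)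
    (ι : Type*) [Fintype ι] (a b : ι → L)
    (R Rstar : L →ₗ[F] L)
    (hR : ∀ x : L, R x = ∑ i, ω (b i) x • a i)
    (hadj : ∀ x y : L, ω (R x) y = ω x (Rstar y))
    (lam : F)
    (hRBs : ∀ x y : L, ⁅Rstar x, Rstar y⁆ = Rstar (⁅Rstar x, y⁆ + ⁅x, Rstar y⁆ + lam • ⁅x, y⁆))
    (hcentroid : ∀ x y : L, R ⁅x, y⁆ + Rstar ⁅x, y⁆ = ⁅R x, y⁆ + ⁅Rstar x, y⁆)
    (I₁ I₂ : LieIdeal F L)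
    (hsup : I₁ ⊔ I₂ = ⁅(⊤ : LieIdeal F L), (⊤ : LieIdeal F L)⁆)
    (hI₁ : ∀ x ∈ I₁, R x = 0 ∧ Rstar x = 0)
    (hI₂ : ∀ x ∈ I₂, R x + Rstar x + lam • x = 0) :
    (∑ i, ∑ j, (⁅a i, a j⁆ ⊗ₜ[F] (b i ⊗ₜ[F] b j)
        - a i ⊗ₜ[F] (⁅a j, b i⁆ ⊗ₜ[F] b j)
        + a i ⊗ₜ[F] (a j ⊗ₜ[F] ⁅b i, b j⁆)) = (0 : L ⊗[F] (L ⊗[F] L))) ∧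
    (∀ y : L, ∑ i, (⁅a i, y⁆ ⊗ₜ[F] b i + a i ⊗ₜ[F] ⁅b i, y⁆
        + ⁅b i, y⁆ ⊗ₜ[F] a i + b i ⊗ₜ[F] ⁅a i, y⁆) = (0 : L ⊗[F] L)) := by
  have hRs := hnd.adjoint_apply_eq_sum hsymm hR hadj
  have hT : (R + Rstar).IsCentroid := fun x y => by
    rw [LinearMap.add_apply, LinearMap.add_apply, add_lie, hcentroid]
  have hS := hT.add_smul_id lam
  have hS_mem : ∀ x y : L, (R + Rstar + lam • LinearMap.id : L →ₗ[F] L) ⁅x, y⁆ ∈ I₁ := fun x y =>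
    LinearMap.apply_mem_of_mem_sup (c := lam) (fun u hu => by simp [hI₁ u hu]) hI₂
      (hsup ▸ LieSubmodule.lie_mem_lie (LieSubmodule.mem_top x) (LieSubmodule.mem_top y))
  refine ⟨hnd.tensor₃_eq_zero (t := cybeTensor a b) fun x y z => ?_,
    fun y => hnd.tensor_eq_zero (t := adSymmTensor a b y) fun x z => ?_⟩
  · rw [dualDistrib_cybeTensor hR hRs, LinearMap.IsRotaBaxter.cybe_pairing hRBs hsymm hinv hadj]
    change ω (Rstar ⁅x, (R + Rstar + lam • LinearMap.id : L →ₗ[F] L) y⁆) z = 0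
    rw [← hS.apply_lie_right, (hI₁ _ (hS_mem x y)).2, map_zero, LinearMap.zero_apply]
  · rw [dualDistrib_adSymmTensor hR hRs]
    exact hT.pairing_add_pairing_eq_zero hsymm hinv x y z

theorem stmt_14
    (F : Type*) [Field F] [CharZero F]
    (L : Type*) [LieRing L] [LieAlgebra F L] [FiniteDimensional F L]
    (ω : LinearMap.BilinForm F L)
    (hnd : ω.Nondegenerate)
    (hsymm : ∀ x y : L, ω x y = ω y x)
    (hinv : ∀ x y z : L, ω ⁅x, y⁆ z = ω x ⁅y, z⁆)
    (ι : Type*) [Fintype ι] (a b : ι → L)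
    (R Rstar : L →ₗ[F] L)
    (hR : ∀ x : L, R x = ∑ i, ω (b i) x • a i)
    (hadj : ∀ x y : L, ω (R x) y = ω x (Rstar y))
    (lam : F) (hlam : lam ≠ 0)
    (hRB : ∀ x y : L, ⁅R x, R y⁆ = R (⁅R x, y⁆ + ⁅x, R y⁆ + lam • ⁅x, y⁆))
    (hRBs : ∀ x y : L, ⁅Rstar x, Rstar y⁆ = Rstar (⁅Rstar x, y⁆ + ⁅x, Rstar y⁆ + lam • ⁅x, y⁆))
    (hcentroid : ∀ x y : L, R ⁅x, y⁆ + Rstar ⁅x, y⁆ = ⁅R x, y⁆ + ⁅Rstar x, y⁆)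
    (I₁ I₂ : LieIdeal F L)
    (hsup : I₁ ⊔ I₂ = ⁅(⊤ : LieIdeal F L), (⊤ : LieIdeal F L)⁆)
    (hinf : I₁ ⊓ I₂ = ⊥)
    (hI₁ : ∀ x ∈ I₁, R x = 0 ∧ Rstar x = 0)
    (hI₂ : ∀ x ∈ I₂, R x + Rstar x + lam • x = 0) :
    (∑ i, ∑ j, (⁅a i, a j⁆ ⊗ₜ[F] (b i ⊗ₜ[F] b j)
        - a i ⊗ₜ[F] (⁅a j, b i⁆ ⊗ₜ[F] b j)
        + a i ⊗ₜ[F] (a j ⊗ₜ[F] ⁅b i, b j⁆)) = (0 : L ⊗[F] (L ⊗[F] L))) ∧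
    (∀ y : L, ∑ i, (⁅a i, y⁆ ⊗ₜ[F] b i + a i ⊗ₜ[F] ⁅b i, y⁆
        + ⁅b i, y⁆ ⊗ₜ[F] a i + b i ⊗ₜ[F] ⁅a i, y⁆) = (0 : L ⊗[F] L)) :=
  stmt_14_general F L ω hnd hsymm hinv ι a b R Rstar hR hadj lam hRBs hcentroid I₁ I₂ hsup hI₁ hI₂
end
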